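/- Let p, q ≥ 1, let G be a split graph with clique C = {c_1,…,c_p} and independent set U = {u_1,…,u_q}, and let G′ be the split reduction graph of G. Let K be an independent set of G′ of size m that contains at least one special vertex. Then every neighbour K′ of K in the token-sliding reconfiguration graph TS_m(G′) has the form K′ = (K \ {s}) ∪ {d} for some special vertex s ∈ K ∩ S and some vertex d ∈ D; that is, any valid token slide from K moves a token located on a special vertex onto a vertex of the clique D. -/

import Mathlib

/-- An independent set of a graph, as a finset of pairwise non-adjacent vertices. -/
def IsIndepF {V : Type*} (H : SimpleGraph V) (I : Finset V) : Prop :=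
  ∀ u ∈ I, ∀ v ∈ I, ¬ H.Adj u v

/-- The token-sliding reconfiguration graph `TS_m(H)`. -/
def TSGraph {V : Type*} [DecidableEq V] (H : SimpleGraph V) (m : ℕ) :
    SimpleGraph {I : Finset V // I.card = m ∧ IsIndepF H I} where
  Adj I J := ∃ u v, J.1 \ I.1 = {u} ∧ I.1 \ J.1 = {v} ∧ H.Adj u v
  symm := by constructor; rintro I J ⟨u, v, h1, h2, h3⟩; exact ⟨v, u, h2, h1, h3.symm⟩
  loopless := by
    constructor
    rintro I ⟨u, v, h1, h2, h3⟩
    rw [Finset.sdiff_self] at h1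
    exact (Finset.singleton_ne_empty u) h1.symm

/-- Vertices of the split reduction graph. -/
inductive SVert (p q : ℕ) : Type where
  | d : Fin p → SVert p q
  | w : Fin q → SVert p q
  | s : Fin q → SVert p q
deriving DecidableEq

/-- The split reduction graph `G'` of a split graph `G` on `Fin p ⊕ Fin q`
(`Sum.inl` is the clique `C`, `Sum.inr` the independent set `U`). -/
def splitRed (p q : ℕ) (G : SimpleGraph (Fin p ⊕ Fin q)) : SimpleGraph (SVert p q) :=
  SimpleGraph.fromRel (fun a b =>
    match a, b with
    | .d i, .d j => i ≠ j
    | .d i, .w j => G.Adj (Sum.inl i) (Sum.inr j)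
    | .s _, .d _ => True
    | _, _ => False)


theorem Finset.eq_erase_union_of_sdiff_eq_singleton {α : Type*} [DecidableEq α]
    {I J : Finset α} {u v : α} (hJI : J \ I = {u}) (hIJ : I \ J = {v}) :
    J = I.erase v ∪ {u} := by
  rw [← sdiff_singleton_eq_erase, ← hIJ, sdiff_sdiff_self_left, ← hJI, inter_comm,
    union_comm, sdiff_union_inter]

lemma IsIndepF.notMem_of_adj {V : Type*} {H : SimpleGraph V} {I : Finset V} (hI : IsIndepF H I)
    {a b : V} (hab : H.Adj a b) (ha : a ∈ I) : b ∉ I :=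
  fun hb => hI a ha b hb hab

namespace SVert

variable {p q : ℕ} {G : SimpleGraph (Fin p ⊕ Fin q)}

lemma splitRed_adj_s_d (i : Fin q) (j : Fin p) : (splitRed p q G).Adj (s i) (d j) := by
  simp [splitRed]

lemma exists_eq_d_of_splitRed_adj {a b : SVert p q} (hab : (splitRed p q G).Adj a b) :
    (∃ k, a = d k) ∨ ∃ k, b = d k := by
  rcases a with k | k | k <;> rcases b with l | l | l <;> simp_all [splitRed]

end SVert

open Finset SVert

theorem splitReduction_slide_from_special_goes_to_clique_general
    (p q : ℕ) (G : SimpleGraph (Fin p ⊕ Fin q))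
    (m : ℕ) (K : Finset (SVert p q)) (hK : K.card = m ∧ IsIndepF (splitRed p q G) K)
    (hspecial : ∃ i : Fin q, SVert.s i ∈ K) :
    ∀ K' : {I : Finset (SVert p q) // I.card = m ∧ IsIndepF (splitRed p q G) I},
      (TSGraph (splitRed p q G) m).Adj ⟨K, hK⟩ K' →
      ∃ (i : Fin q) (j : Fin p), SVert.s i ∈ K ∧
        K'.1 = K.erase (SVert.s i) ∪ {SVert.d j} := by
  rintro ⟨K', hK'⟩ ⟨u, v, hu, hv, huv⟩
  obtain ⟨i, hi⟩ := hspecial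
  have hvK : v ∈ K \ K' := hv ▸ mem_singleton_self v
  have huK' : u ∈ K' \ K := hu ▸ mem_singleton_self u
  -- `s i ∈ K` keeps the token `v` off `D`, so the edge `uv` forces `u` into `D`.
  obtain ⟨j, rfl⟩ : ∃ j, u = d j := by
    refine (exists_eq_d_of_splitRed_adj huv).resolve_right ?_
    rintro ⟨k, rfl⟩
    exact hK.2.notMem_of_adj (splitRed_adj_s_d i k) hi (mem_sdiff.1 hvK).1
  have hsv : s i = v := by
    have hsK' : s i ∉ K' := fun hs =>
      hK'.2.notMem_of_adj (splitRed_adj_s_d i j) hs (mem_sdiff.1 huK').1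
    simpa [hv] using mem_sdiff.2 ⟨hi, hsK'⟩
  exact ⟨i, j, hi, hsv ▸ eq_erase_union_of_sdiff_eq_singleton hu hv⟩

theorem splitReduction_slide_from_special_goes_to_clique
    (p q : ℕ) (hp : 1 ≤ p) (hq : 1 ≤ q) (G : SimpleGraph (Fin p ⊕ Fin q))
    (hC : ∀ i j : Fin p, i ≠ j → G.Adj (Sum.inl i) (Sum.inl j))
    (hU : ∀ i j : Fin q, ¬ G.Adj (Sum.inr i) (Sum.inr j))
    (m : ℕ) (K : Finset (SVert p q)) (hK : K.card = m ∧ IsIndepF (splitRed p q G) K)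
    (hspecial : ∃ i : Fin q, SVert.s i ∈ K) :
    ∀ K' : {I : Finset (SVert p q) // I.card = m ∧ IsIndepF (splitRed p q G) I},
      (TSGraph (splitRed p q G) m).Adj ⟨K, hK⟩ K' →
      ∃ (i : Fin q) (j : Fin p), SVert.s i ∈ K ∧
        K'.1 = K.erase (SVert.s i) ∪ {SVert.d j} :=
  splitReduction_slide_from_special_goes_to_clique_general p q G m K hK hspecial
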